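/- The polynomial V(x,y) = 1 + 4(1-a₁)x + 2(2a₁-1)y + 4(a₁-1)²x² - 4(a₁-1)(2a₁-1)xy - 4(a₁-1)²y² is an inverse integrating factor of the planar system ẋ = -y, ẏ = x + 2(1-a₁)x² + 2(2a₁-1)xy + 2(a₁-1)y², and V(0,0) = 1 ≠ 0. -/

import Mathlib

noncomputable def P9 (a₁ x y : ℝ) : ℝ := -y
noncomputable def Q9 (a₁ x y : ℝ) : ℝ :=
  x + 2*(1 - a₁)*x^2 + 2*(2*a₁ - 1)*x*y + 2*(a₁ - 1)*y^2
noncomputable def V9 (a₁ x y : ℝ) : ℝ :=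
  1 + 4*(1 - a₁)*x + 2*(2*a₁ - 1)*y + 4*(a₁ - 1)^2*x^2
  - 4*(a₁ - 1)*(2*a₁ - 1)*x*y - 4*(a₁ - 1)^2*y^2

/-! Both partial derivatives of `P`, `Q`, `V` are read off by viewing each as a quadratic in the
differentiated variable; the inverse integrating factor identity is then a polynomial identity. -/

theorem deriv_quadratic (a b c t : ℝ) :
    deriv (fun s => a + b * s + c * s ^ 2) t = b + 2 * c * t := by
  have h : HasDerivAt (fun s => a + b * s + c * s ^ 2) (b * 1 + c * (2 * t)) t := by
    simpa using (((hasDerivAt_id' t).const_mul b).const_add a).fun_add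
      ((hasDerivAt_pow 2 t).const_mul c)
  rw [h.deriv]
  ring

section PartialDerivatives

variable (a₁ x y : ℝ)

theorem deriv_V9_fst : deriv (fun s => V9 a₁ s y) x
    = 4*(1 - a₁) + 8*(a₁ - 1)^2*x - 4*(a₁ - 1)*(2*a₁ - 1)*y := by
  have hV : (fun s => V9 a₁ s y) = fun s => (1 + 2*(2*a₁ - 1)*y - 4*(a₁ - 1)^2*y^2)
      + (4*(1 - a₁) - 4*(a₁ - 1)*(2*a₁ - 1)*y) * s + 4*(a₁ - 1)^2 * s^2 := by
    funext s; simp only [V9]; ring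
  rw [hV, deriv_quadratic]; ring

theorem deriv_V9_snd : deriv (fun s => V9 a₁ x s) y
    = 2*(2*a₁ - 1) - 4*(a₁ - 1)*(2*a₁ - 1)*x - 8*(a₁ - 1)^2*y := by
  have hV : (fun s => V9 a₁ x s) = fun s => (1 + 4*(1 - a₁)*x + 4*(a₁ - 1)^2*x^2)
      + (2*(2*a₁ - 1) - 4*(a₁ - 1)*(2*a₁ - 1)*x) * s + (-4*(a₁ - 1)^2) * s^2 := by
    funext s; simp only [V9]; ring
  rw [hV, deriv_quadratic]; ring

theorem deriv_P9_fst : deriv (fun s => P9 a₁ s y) x = 0 :=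
  deriv_const x (-y)

theorem deriv_Q9_snd : deriv (fun s => Q9 a₁ x s) y
    = 2*(2*a₁ - 1)*x + 4*(a₁ - 1)*y := by
  simp only [Q9]
  rw [deriv_quadratic]
  ring

end PartialDerivatives

/-- V is an inverse integrating factor and V(0,0) = 1 ≠ 0. -/
theorem stmt_9 (a₁ : ℝ) :
    (∀ x y : ℝ,
      P9 a₁ x y * deriv (fun s => V9 a₁ s y) x
      + Q9 a₁ x y * deriv (fun s => V9 a₁ x s) y
      = (deriv (fun s => P9 a₁ s y) x + deriv (fun s => Q9 a₁ x s) y)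
          * V9 a₁ x y)
    ∧ V9 a₁ 0 0 = 1 ∧ (1 : ℝ) ≠ 0 := by
  refine ⟨fun x y => ?_, by norm_num [V9], one_ne_zero⟩
  rw [deriv_V9_fst, deriv_V9_snd, deriv_P9_fst, deriv_Q9_snd]
  simp only [P9, Q9, V9]
  ring
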